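/- Let p be a prime number and let G be a nilpotent group that is generated by finitely many elements, each of which has order a power of p. Then G is a finite p-group, i.e. G is finite and every element of G has order a power of p. -/

import Mathlib

/-!
Induct on the nilpotency class. If `G / Z(G)` is finite, a commutator `⁅a, b⁆` depends only on
the classes of `a` and `b` modulo the centre, so `G` has only finitely many commutators and, by
Schur's theorem, a finite derived subgroup. The abelianization is finitely generated by elements of
finite order, hence finite, so `G` is finite. In a finite nilpotent group the Sylow `p`-subgroup is
normal, so it contains every element of `p`-power order, hence all of the generators.
-/

open Subgroup
open scoped commutatorElement

section Commutators

variable {G : Type*} [Group G]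

theorem commutatorElement_mul_mem_center_left {z : G} (hz : z ∈ center G) (g h : G) :
    ⁅g * z, h⁆ = ⁅g, h⁆ := by
  have hzh : z * h = h * z := (mem_center_iff.mp hz h).symm
  rw [commutatorElement_def, commutatorElement_def, mul_inv_rev, mul_assoc g z h, hzh]
  group

theorem commutatorElement_mul_mem_center_right {z : G} (hz : z ∈ center G) (g h : G) :
    ⁅g, h * z⁆ = ⁅g, h⁆ := by
  rw [← commutatorElement_inv, commutatorElement_mul_mem_center_left hz, commutatorElement_inv]

theorem finite_commutatorSet_of_finite_quotient_center [Finite (G ⧸ center G)] :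
    Finite (commutatorSet G) := by
  have hsub : commutatorSet G ⊆
      Set.range fun q : (G ⧸ center G) × (G ⧸ center G) => ⁅q.1.out, q.2.out⁆ := by
    rintro _ ⟨a, b, rfl⟩
    obtain ⟨z, hz⟩ := QuotientGroup.mk_out_eq_mul (center G) a
    obtain ⟨w, hw⟩ := QuotientGroup.mk_out_eq_mul (center G) b
    refine ⟨((a : G ⧸ center G), (b : G ⧸ center G)), ?_⟩
    simp only [hz, hw, commutatorElement_mul_mem_center_left z.2,
      commutatorElement_mul_mem_center_right w.2]
  exact ((Set.finite_range _).subset hsub).to_subtype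

end Commutators

theorem Subgroup.closure_image_eq_top_of_surjective {G H : Type*} [Group G] [Group H]
    {f : G →* H} (hf : Function.Surjective f) {s : Set G} (hgen : closure s = ⊤) :
    closure (f '' s) = ⊤ := by
  rw [← MonoidHom.map_closure, hgen, ← MonoidHom.range_eq_map, MonoidHom.range_eq_top.mpr hf]

theorem CommGroup.isMulTorsion_of_closure_eq_top {G : Type*} [CommGroup G] {s : Set G}
    (hgen : closure s = ⊤) (htors : ∀ g ∈ s, IsOfFinOrder g) : IsMulTorsion G := fun g =>
  (closure_le (CommGroup.torsion G)).mpr htors (hgen ▸ mem_top g)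

theorem finite_of_finite_commutator_of_closure_eq_top {G : Type*} [Group G]
    [Finite (commutator G)] {s : Set G} (hs : s.Finite) (hgen : closure s = ⊤)
    (htors : ∀ g ∈ s, IsOfFinOrder g) : Finite G := by
  have : Group.FG G := Group.fg_iff.mpr ⟨s, hgen, hs⟩
  have habTorsion : IsMulTorsion (Abelianization G) := by
    refine CommGroup.isMulTorsion_of_closure_eq_top (s := Abelianization.of '' s) ?_ ?_
    · exact closure_image_eq_top_of_surjective (QuotientGroup.mk'_surjective _) hgen
    · rintro _ ⟨g, hg, rfl⟩
      exact Abelianization.of.isOfFinOrder (htors g hg)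
  have : Group.FG (Abelianization G) := inferInstanceAs (Group.FG (G ⧸ commutator G))
  have : Finite (G ⧸ commutator G) :=
    CommGroup.finite_of_fg_isMulTorsion (Abelianization G) habTorsion
  exact Finite.of_subgroup_quotient (commutator G)

theorem Group.IsNilpotent.finite_of_closure_eq_top {G : Type*} [Group G] [Group.IsNilpotent G]
    {s : Set G} (hs : s.Finite) (hgen : closure s = ⊤) (htors : ∀ g ∈ s, IsOfFinOrder g) :
    Finite G := by
  revert s
  refine Group.nilpotent_center_quotient_ind
    (P := fun G _ _ => ∀ {s : Set G}, s.Finite → closure s = ⊤ → (∀ g ∈ s, IsOfFinOrder g) →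
      Finite G) G (fun G _ _ _ _ _ _ => Finite.of_subsingleton) fun G _ _ ih s hs hgen htors => ?_
  have : Finite (G ⧸ center G) := by
    refine ih (hs.image (QuotientGroup.mk' (center G))) ?_ ?_
    · exact closure_image_eq_top_of_surjective (QuotientGroup.mk'_surjective _) hgen
    · rintro _ ⟨g, hg, rfl⟩
      exact (QuotientGroup.mk' (center G)).isOfFinOrder (htors g hg)
  have := finite_commutatorSet_of_finite_quotient_center (G := G)
  exact finite_of_finite_commutator_of_closure_eq_top hs hgen htors

theorem Sylow.mem_of_pow_prime_pow_eq_one {G : Type*} [Group G] [Finite G] {p : ℕ} [Fact p.Prime]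
    (P : Sylow p G) [P.Normal] {g : G} {n : ℕ} (hg : g ^ p ^ n = 1) : g ∈ P := by
  have hpg : IsPGroup p (zpowers g) :=
    IsPGroup.of_card_dvd_pow (n := n) (Nat.card_zpowers g ▸ orderOf_dvd_of_pow_eq_one hg)
  obtain ⟨Q, hQ⟩ := hpg.exists_le_sylow
  have : Unique (Sylow p G) := Sylow.unique_of_normal P ‹_›
  exact Subsingleton.elim Q P ▸ hQ (mem_zpowers g)

theorem IsPGroup.of_isNilpotent_of_closure_eq_top {G : Type*} [Group G] [Finite G]
    [Group.IsNilpotent G] {p : ℕ} [Fact p.Prime] {s : Set G} (hgen : closure s = ⊤)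
    (hord : ∀ g ∈ s, ∃ n : ℕ, g ^ p ^ n = 1) : IsPGroup p G := by
  obtain ⟨P⟩ : Nonempty (Sylow p G) := inferInstance
  have hP : (P : Subgroup G) = ⊤ := by
    rw [eq_top_iff, ← hgen, closure_le]
    intro g hg
    obtain ⟨n, hn⟩ := hord g hg
    exact P.mem_of_pow_prime_pow_eq_one hn
  exact P.isPGroup'.of_equiv ((MulEquiv.subgroupCongr hP).trans topEquiv)

/-- A nilpotent group generated by finitely many elements of `p`-power order is a
finite `p`-group. -/
theorem stmt_1 (p : ℕ) (hp : p.Prime)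
    (G : Type*) [Group G] [Group.IsNilpotent G]
    (s : Finset G) (hgen : Subgroup.closure (s : Set G) = ⊤)
    (hord : ∀ g ∈ s, ∃ n : ℕ, g ^ p ^ n = 1) :
    Finite G ∧ IsPGroup p G := by
  have : Fact p.Prime := ⟨hp⟩
  have htors : ∀ g ∈ (s : Set G), IsOfFinOrder g := fun g hg => by
    obtain ⟨n, hn⟩ := hord g hg
    exact isOfFinOrder_iff_pow_eq_one.mpr ⟨p ^ n, pow_pos hp.pos n, hn⟩
  have hfin : Finite G := Group.IsNilpotent.finite_of_closure_eq_top s.finite_toSet hgen htors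
  exact ⟨hfin, IsPGroup.of_isNilpotent_of_closure_eq_top hgen hord⟩
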